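/- Define ω_k(r) recursively by ω_0(r)=1, ω_{k+1}(r) = ∫_r^∞ ∫_s^∞ (e^{-t}/t) ω_k(t) dt ds. Then for all k ≥ 1 and r ≥ 1, the derivative satisfies −e^{-kr}/(k!(k−1)!) < ω_k'(r) < 0. -/

import Mathlib

/-!
By induction, `ω k` is positive and continuous on `(0, ∞)` with
`ω k t ≤ max(1, 1/t)^(2k) e^(-kt) / (k!)^2`: multiplying by `e^(-t)/t` and taking a tail
integral `∫_r^∞` each preserve a bound of this shape, with updated constants. Differentiating
the outer tail integral gives `ω_k'(r) = -∫_r^∞ e^(-t)/t ω_(k-1)(t) dt`, which is negative; for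
`r ≥ 1` the factor `1/t < 1` turns the bound on `ω_(k-1)` into the strict lower bound.
-/

open MeasureTheory Real Set Filter

theorem hasDerivAt_setIntegral_Ioi {E : Type*} [NormedAddCommGroup E] [NormedSpace ℝ E]
    [CompleteSpace E] {f : ℝ → E} {a x : ℝ} (hax : a < x) (hf : IntegrableOn f (Ioi a))
    (hcont : ContinuousOn f (Ioi a)) :
    HasDerivAt (fun y => ∫ t in Ioi y, f t) (-f x) x := by
  have htail : ∀ y ∈ Ioi a, ∫ t in Ioi y, f t = (∫ t in Ioi a, f t) - ∫ t in a..y, f t :=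
    fun y hy => by rw [← intervalIntegral.integral_Ioi_sub_Ioi hf (le_of_lt hy), sub_sub_cancel]
  have hint : IntervalIntegrable f volume a x :=
    (intervalIntegrable_iff_integrableOn_Ioc_of_le hax.le).2 (hf.mono_set Ioc_subset_Ioi_self)
  have hderiv := (intervalIntegral.integral_hasDerivAt_right hint
    (hcont.stronglyMeasurableAtFilter isOpen_Ioi x hax)
    (hcont.continuousAt (Ioi_mem_nhds hax))).const_sub (∫ t in Ioi a, f t)
  exact hderiv.congr_of_eventuallyEq (eventually_of_mem (Ioi_mem_nhds hax) htail)

theorem setIntegral_Ioi_pos {f : ℝ → ℝ} {a : ℝ} (hf : IntegrableOn f (Ioi a))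
    (hpos : ∀ t ∈ Ioi a, 0 < f t) : 0 < ∫ t in Ioi a, f t := by
  rw [setIntegral_pos_iff_support_of_nonneg_ae
    ((ae_restrict_iff' measurableSet_Ioi).2 (ae_of_all _ fun t ht => (hpos t ht).le)) hf,
    inter_eq_right.2 fun t ht => Function.mem_support.2 (hpos t ht).ne', Real.volume_Ioi]
  exact ENNReal.zero_lt_top

theorem setIntegral_Ioi_lt_setIntegral_Ioi {f g : ℝ → ℝ} {a : ℝ} (hf : IntegrableOn f (Ioi a))
    (hg : IntegrableOn g (Ioi a)) (hlt : ∀ t ∈ Ioi a, f t < g t) :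
    ∫ t in Ioi a, f t < ∫ t in Ioi a, g t := by
  have := setIntegral_Ioi_pos (f := fun t => g t - f t) (hg.sub hf) fun t ht =>
    sub_pos.2 (hlt t ht)
  rwa [integral_sub hg hf, sub_pos] at this

theorem integral_exp_neg_mul_Ioi {L : ℝ} (hL : 0 < L) (a : ℝ) :
    ∫ t in Ioi a, exp (-L * t) = exp (-L * a) / L := by
  rw [integral_exp_mul_Ioi (neg_neg_of_pos hL), div_neg, neg_div, neg_neg]

/-- The factor `max 1 t⁻¹ ^ m` absorbs the weights `1/t` near `0`; it equals `1` for `t ≥ 1`. -/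
structure ExpTailBound (f : ℝ → ℝ) (m : ℕ) (L d : ℝ) : Prop where
  continuousOn : ContinuousOn f (Ioi 0)
  pos : ∀ t, 0 < t → 0 < f t
  le : ∀ t, 0 < t → f t ≤ max 1 t⁻¹ ^ m * exp (-L * t) * d

namespace ExpTailBound

variable {f : ℝ → ℝ} {m : ℕ} {L d : ℝ}

theorem le_of_one_le (h : ExpTailBound f m L d) {t : ℝ} (ht : 1 ≤ t) :
    f t ≤ exp (-L * t) * d := by
  simpa [max_eq_left (inv_le_one_of_one_le₀ ht)] using h.le t (one_pos.trans_le ht)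

theorem const_pos (h : ExpTailBound f m L d) : 0 < d :=
  pos_of_mul_pos_right ((h.pos 1 one_pos).trans_le (h.le 1 one_pos)) (by positivity)

theorem le_on_Ioi (h : ExpTailBound f m L d) {a : ℝ} (ha : 0 < a) :
    ∀ t ∈ Ioi a, f t ≤ max 1 a⁻¹ ^ m * d * exp (-L * t) := by
  intro t ht
  have := h.const_pos
  calc f t ≤ max 1 t⁻¹ ^ m * exp (-L * t) * d := h.le t (ha.trans ht)
    _ ≤ max 1 a⁻¹ ^ m * exp (-L * t) * d := by
      gcongr
      exact ht.le
    _ = max 1 a⁻¹ ^ m * d * exp (-L * t) := by ring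

theorem integrableOn (h : ExpTailBound f m L d) (hL : 0 < L) {a : ℝ} (ha : 0 < a) :
    IntegrableOn f (Ioi a) := by
  refine Integrable.mono' ((exp_neg_integrableOn_Ioi a hL).const_mul (max 1 a⁻¹ ^ m * d))
    ((h.continuousOn.mono (Ioi_subset_Ioi ha.le)).aestronglyMeasurable measurableSet_Ioi) ?_
  refine (ae_restrict_iff' measurableSet_Ioi).2 (ae_of_all _ fun t ht => ?_)
  rw [Real.norm_of_nonneg (h.pos t (ha.trans ht)).le]
  exact h.le_on_Ioi ha t ht

theorem hasDerivAt_integral_Ioi (h : ExpTailBound f m L d) (hL : 0 < L) {x : ℝ} (hx : 0 < x) :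
    HasDerivAt (fun y => ∫ t in Ioi y, f t) (-f x) x :=
  hasDerivAt_setIntegral_Ioi (half_lt_self hx) (h.integrableOn hL (half_pos hx))
    (h.continuousOn.mono (Ioi_subset_Ioi (half_pos hx).le))

theorem integral_Ioi (h : ExpTailBound f m L d) (hL : 0 < L) :
    ExpTailBound (fun y => ∫ t in Ioi y, f t) m L (d / L) where
  continuousOn x hx := (h.hasDerivAt_integral_Ioi hL hx).continuousAt.continuousWithinAt
  pos r hr := setIntegral_Ioi_pos (h.integrableOn hL hr) fun t ht => h.pos t (hr.trans ht)
  le r hr := calc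
    ∫ t in Ioi r, f t ≤ ∫ t in Ioi r, max 1 r⁻¹ ^ m * d * exp (-L * t) :=
      setIntegral_mono_on (h.integrableOn hL hr)
        ((exp_neg_integrableOn_Ioi r hL).const_mul _) measurableSet_Ioi (h.le_on_Ioi hr)
    _ = max 1 r⁻¹ ^ m * exp (-L * r) * (d / L) := by
      rw [integral_const_mul, integral_exp_neg_mul_Ioi hL]
      ring

theorem exp_neg_div_mul (h : ExpTailBound f m L d) :
    ExpTailBound (fun t => exp (-t) / t * f t) (m + 1) (L + 1) d where
  continuousOn := ((continuous_exp.comp continuous_neg).continuousOn.div continuousOn_id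
    fun _ ht => ht.ne').mul h.continuousOn
  pos t ht := mul_pos (div_pos (exp_pos _) ht) (h.pos t ht)
  le t ht := calc
    exp (-t) / t * f t = t⁻¹ * (exp (-t) * f t) := by ring
    _ ≤ max 1 t⁻¹ * (exp (-t) * (max 1 t⁻¹ ^ m * exp (-L * t) * d)) := by
      gcongr
      · exact mul_nonneg (exp_pos _).le (h.pos t ht).le
      · exact le_max_right _ _
      · exact h.le t ht
    _ = max 1 t⁻¹ ^ (m + 1) * exp (-(L + 1) * t) * d := by
      rw [show -(L + 1) * t = -t + -L * t by ring, exp_add]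
      ring

theorem mono_pow (h : ExpTailBound f m L d) {n : ℕ} (hmn : m ≤ n) : ExpTailBound f n L d where
  continuousOn := h.continuousOn
  pos := h.pos
  le t ht := (h.le t ht).trans (by
    have := h.const_pos
    gcongr
    exact le_max_left _ _)

theorem congr (h : ExpTailBound f m L d) {g : ℝ → ℝ} (hfg : EqOn f g (Ioi 0)) :
    ExpTailBound g m L d where
  continuousOn := h.continuousOn.congr hfg.symm
  pos t ht := hfg ht ▸ h.pos t ht
  le t ht := hfg ht ▸ h.le t ht

theorem integral_exp_neg_div_mul_lt (h : ExpTailBound f m L d) (hL : 0 < L + 1) {r : ℝ}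
    (hr : 1 ≤ r) :
    ∫ t in Ioi r, exp (-t) / t * f t < exp (-(L + 1) * r) * d / (L + 1) := by
  have hpointwise : ∀ t ∈ Ioi r, exp (-t) / t * f t < exp (-(L + 1) * t) * d := by
    intro t ht
    have ht1 : 1 < t := hr.trans_lt ht
    have := h.pos t (one_pos.trans ht1)
    calc exp (-t) / t * f t < exp (-t) * f t := by gcongr; exact div_lt_self (exp_pos _) ht1
      _ ≤ exp (-t) * (exp (-L * t) * d) := by gcongr; exact h.le_of_one_le ht1.le
      _ = exp (-(L + 1) * t) * d := by
        rw [show -(L + 1) * t = -t + -L * t by ring, exp_add]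
        ring
  calc ∫ t in Ioi r, exp (-t) / t * f t < ∫ t in Ioi r, exp (-(L + 1) * t) * d :=
        setIntegral_Ioi_lt_setIntegral_Ioi (h.exp_neg_div_mul.integrableOn hL (one_pos.trans_le hr))
          ((exp_neg_integrableOn_Ioi r hL).mul_const d) hpointwise
    _ = exp (-(L + 1) * r) * d / (L + 1) := by
      rw [integral_mul_const, integral_exp_neg_mul_Ioi hL]
      ring

end ExpTailBound

theorem expTailBound_of_recursion (ω : ℕ → ℝ → ℝ) (hω0 : ∀ r, ω 0 r = 1)
    (hrec : ∀ k : ℕ, ∀ r : ℝ, 0 < r → ω (k + 1) r =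
      ∫ s in Ioi r, ∫ t in Ioi s, exp (-t) / t * ω k t) (k : ℕ) :
    ExpTailBound (ω k) (2 * k) k ((k.factorial : ℝ) ^ 2)⁻¹ := by
  induction k with
  | zero => exact ⟨by simp only [funext hω0, continuousOn_const], by simp [hω0], by simp [hω0]⟩
  | succ k ih =>
    have hL : (0 : ℝ) < k + 1 := by positivity
    have hstep := ((ih.exp_neg_div_mul.integral_Ioi hL).integral_Ioi hL).congr
      fun r hr => (hrec k r hr).symm
    convert hstep.mono_pow (n := 2 * (k + 1)) (by omega) using 2
    · push_cast; ring
    · rw [Nat.factorial_succ]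
      push_cast
      field_simp

theorem omega_deriv_bounds (ω : ℕ → ℝ → ℝ) (hω0 : ∀ r, ω 0 r = 1)
    (hrec : ∀ k : ℕ, ∀ r : ℝ, 0 < r → ω (k + 1) r =
      ∫ s in Set.Ioi r, ∫ t in Set.Ioi s, Real.exp (-t) / t * ω k t) :
    ∀ k : ℕ, 1 ≤ k → ∀ r : ℝ, 1 ≤ r →
      -Real.exp (-(k : ℝ) * r) / ((Nat.factorial k : ℝ) * (Nat.factorial (k - 1) : ℝ)) <
          deriv (ω k) r ∧ deriv (ω k) r < 0 := by
  intro k hk r hr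
  obtain ⟨m, rfl⟩ := Nat.exists_eq_add_of_le' hk
  have hr0 : 0 < r := one_pos.trans_le hr
  have hL : (0 : ℝ) < m + 1 := by positivity
  have hω := expTailBound_of_recursion ω hω0 hrec m
  have hderiv : HasDerivAt (ω (m + 1)) (-∫ t in Ioi r, exp (-t) / t * ω m t) r :=
    ((hω.exp_neg_div_mul.integral_Ioi hL).hasDerivAt_integral_Ioi hL hr0).congr_of_eventuallyEq
      (eventually_of_mem (Ioi_mem_nhds hr0) fun y hy => hrec m y hy)
  rw [hderiv.deriv]
  refine ⟨?_, neg_neg_of_pos ((hω.exp_neg_div_mul.integral_Ioi hL).pos r hr0)⟩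
  have hbound : exp (-((m + 1 : ℕ) : ℝ) * r) / ((m + 1).factorial * (m + 1 - 1).factorial)
      = exp (-(m + 1) * r) * ((m.factorial : ℝ) ^ 2)⁻¹ / (m + 1) := by
    rw [Nat.add_sub_cancel, Nat.factorial_succ]
    push_cast
    field_simp
  rw [neg_div, neg_lt_neg_iff, hbound]
  exact hω.integral_exp_neg_div_mul_lt hL hr
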